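/- arXiv:2006.13574 — 2 statements merged into one kernel-verified Lean document; each statement's English description precedes it below -/
import Mathlib

section
/- Let Σᵢ (i = 1,…,5) denote the matrices S₁ = X_{2α+β}, S₂ = X_{−(2α+β)}⁻¹, S₃ = X_β X_{α+β}⁻¹ X_{2α+β}, S₄ = X_{−β}⁻¹, S₅ = X_β in Sp₄(ℤ). Then the additional defining relation of the Steinberg group is satisfied: (S₁S₂S₁)² (S₁S₃⁻¹S₅) (S₁S₂S₁)⁻² (S₁S₃⁻¹S₅) = 1. -/
open Matrix

def Xa : Matrix (Fin 4) (Fin 4) ℤ := !![1,1,0,0; 0,1,0,0; 0,0,1,0; 0,0,-1,1]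
def Xb : Matrix (Fin 4) (Fin 4) ℤ := !![1,0,0,0; 0,1,0,1; 0,0,1,0; 0,0,0,1]
def Xab : Matrix (Fin 4) (Fin 4) ℤ := !![1,0,0,1; 0,1,1,0; 0,0,1,0; 0,0,0,1]
def X2ab : Matrix (Fin 4) (Fin 4) ℤ := !![1,0,1,0; 0,1,0,0; 0,0,1,0; 0,0,0,1]

noncomputable def S1 : Matrix (Fin 4) (Fin 4) ℤ := X2ab
noncomputable def S2 : Matrix (Fin 4) (Fin 4) ℤ := (X2abᵀ)⁻¹
noncomputable def S3 : Matrix (Fin 4) (Fin 4) ℤ := Xb * Xab⁻¹ * X2ab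
noncomputable def S5 : Matrix (Fin 4) (Fin 4) ℤ := Xb

lemma hS2 : S2 = !![1,0,0,0; 0,1,0,0; -1,0,1,0; 0,0,0,1] := by
  rw [S2, inv_eq_left_inv]
  ext i j
  fin_cases i <;> fin_cases j <;>
    simp [X2ab, Matrix.mul_apply, Fin.sum_univ_four, Matrix.transpose]

lemma hXabi : Xab⁻¹ = !![1,0,0,-1; 0,1,-1,0; 0,0,1,0; 0,0,0,1] := by
  rw [inv_eq_left_inv]
  ext i j
  fin_cases i <;> fin_cases j <;>
    simp [Xab, Matrix.mul_apply, Fin.sum_univ_four] <;> rfl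

lemma hS3i : S3⁻¹ = !![1,0,-1,1; 0,1,1,-1; 0,0,1,0; 0,0,0,1] := by
  rw [S3, hXabi, inv_eq_left_inv]
  ext i j
  fin_cases i <;> fin_cases j <;>
    simp [Xb, X2ab, Matrix.mul_apply, Fin.sum_univ_four] <;> rfl

lemma hM : (S1 * S2 * S1) ^ 2 = !![-1,0,0,0; 0,1,0,0; 0,0,-1,0; 0,0,0,1] := by
  rw [hS2, S1, sq]
  ext i j
  fin_cases i <;> fin_cases j <;>
    simp [X2ab, Matrix.mul_apply, Fin.sum_univ_four] <;> rfl

lemma hMi : ((S1 * S2 * S1) ^ 2)⁻¹ = !![-1,0,0,0; 0,1,0,0; 0,0,-1,0; 0,0,0,1] := by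
  rw [hM, inv_eq_left_inv]
  ext i j
  fin_cases i <;> fin_cases j <;>
    simp [Matrix.mul_apply, Fin.sum_univ_four] <;> rfl

lemma hB : S1 * S3⁻¹ * S5 = !![1,0,0,1; 0,1,1,0; 0,0,1,0; 0,0,0,1] := by
  rw [hS3i, S1, S5]
  ext i j
  fin_cases i <;> fin_cases j <;>
    simp [Xb, X2ab, Matrix.mul_apply, Fin.sum_univ_four] <;> rfl

theorem stmt13 :
    (S1 * S2 * S1) ^ 2 * (S1 * S3⁻¹ * S5) * ((S1 * S2 * S1) ^ 2)⁻¹ *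
      (S1 * S3⁻¹ * S5) = 1 := by
  rw [hMi, hM, hB]
  ext i j
  fin_cases i <;> fin_cases j <;>
    simp [Matrix.mul_apply, Fin.sum_univ_four, Matrix.one_apply] <;> rfl
end

section
/- In the braid group B₆, the word σ₄⁻¹ σ₁σ₃⁻¹σ₅σ₄σ₁⁻¹σ₃σ₅⁻¹ σ₅σ₄ σ₁σ₃⁻¹σ₅ σ₄⁻¹σ₅⁻¹σ₁⁻¹ represents the identity element. -/
def braidRels : Set (FreeGroup (Fin 5)) :=
  {r | ∃ i j : Fin 5,
      ((i : ℕ) + 1 < (j : ℕ) ∧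
        r = FreeGroup.of i * FreeGroup.of j * (FreeGroup.of i)⁻¹ * (FreeGroup.of j)⁻¹) ∨
      ((j : ℕ) = (i : ℕ) + 1 ∧
        r = FreeGroup.of i * FreeGroup.of j * FreeGroup.of i *
            (FreeGroup.of j * FreeGroup.of i * FreeGroup.of j)⁻¹)}

abbrev B6 := PresentedGroup braidRels

def σ (i : Fin 5) : B6 := PresentedGroup.of i

lemma rel_one {r : FreeGroup (Fin 5)} (h : r ∈ braidRels) :
    (QuotientGroup.mk r : B6) = 1 :=
  (QuotientGroup.eq_one_iff r).2 (Subgroup.subset_normalClosure h)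

lemma comm_rel {i j : Fin 5} (h : (i : ℕ) + 1 < (j : ℕ)) : σ i * σ j = σ j * σ i := by
  have h1 := rel_one (r := FreeGroup.of i * FreeGroup.of j * (FreeGroup.of i)⁻¹ *
      (FreeGroup.of j)⁻¹) ⟨i, j, Or.inl ⟨h, rfl⟩⟩
  simp only [QuotientGroup.mk_mul, QuotientGroup.mk_inv] at h1
  have h2 : σ i * σ j * (σ i)⁻¹ * (σ j)⁻¹ = 1 := h1
  rw [mul_inv_eq_one, mul_inv_eq_iff_eq_mul] at h2
  exact h2

lemma braid_rel {i j : Fin 5} (h : (j : ℕ) = (i : ℕ) + 1) :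
    σ i * σ j * σ i = σ j * σ i * σ j := by
  have h1 := rel_one (r := FreeGroup.of i * FreeGroup.of j * FreeGroup.of i *
      (FreeGroup.of j * FreeGroup.of i * FreeGroup.of j)⁻¹) ⟨i, j, Or.inr ⟨h, rfl⟩⟩
  simp only [QuotientGroup.mk_mul, QuotientGroup.mk_inv] at h1
  have h2 : σ i * σ j * σ i * (σ j * σ i * σ j)⁻¹ = 1 := h1
  rw [mul_inv_eq_one] at h2
  exact h2

lemma swap {G : Type*} [Group G] {x y : G} (h : x * y = y * x) (z : G) :
    x * (y * z) = y * (x * z) := by rw [← mul_assoc, h, mul_assoc]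

theorem stmt15 :
    (σ 3)⁻¹ * σ 0 * (σ 2)⁻¹ * σ 4 * σ 3 * (σ 0)⁻¹ * σ 2 * (σ 4)⁻¹ *
    σ 4 * σ 3 * σ 0 * (σ 2)⁻¹ * σ 4 * (σ 3)⁻¹ * (σ 4)⁻¹ * (σ 0)⁻¹ = 1 := by
  have h02 : σ 0 * σ 2 = σ 2 * σ 0 := comm_rel (by decide)
  have h03 : σ 0 * σ 3 = σ 3 * σ 0 := comm_rel (by decide)
  have h04 : σ 0 * σ 4 = σ 4 * σ 0 := comm_rel (by decide)
  have h24 : σ 2 * σ 4 = σ 4 * σ 2 := comm_rel (by decide)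
  have b23 : σ 2 * σ 3 * σ 2 = σ 3 * σ 2 * σ 3 := braid_rel (by decide)
  have b34 : σ 3 * σ 4 * σ 3 = σ 4 * σ 3 * σ 4 := braid_rel (by decide)
  -- derived commutations with inverses
  have h02' : σ 0 * (σ 2)⁻¹ = (σ 2)⁻¹ * σ 0 := (Commute.inv_right h02)
  have h03' : σ 0 * (σ 3)⁻¹ = (σ 3)⁻¹ * σ 0 := (Commute.inv_right h03)
  have h04' : σ 0 * (σ 4)⁻¹ = (σ 4)⁻¹ * σ 0 := (Commute.inv_right h04)
  have h02i : (σ 0)⁻¹ * σ 2 = σ 2 * (σ 0)⁻¹ := (Commute.inv_left h02)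
  have h03i : (σ 0)⁻¹ * σ 3 = σ 3 * (σ 0)⁻¹ := (Commute.inv_left h03)
  have h42 : σ 4 * σ 2 = σ 2 * σ 4 := h24.symm
  have b23' : ∀ z : B6, σ 3 * (σ 2 * (σ 3 * z)) = σ 2 * (σ 3 * (σ 2 * z)) := by
    intro z; simp only [← mul_assoc]; rw [b23]
  have b34' : ∀ z : B6, σ 4 * (σ 3 * (σ 4 * z)) = σ 3 * (σ 4 * (σ 3 * z)) := by
    intro z; simp only [← mul_assoc]; rw [b34]
  simp only [mul_assoc]
  -- cancel σ4⁻¹ * σ4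
  rw [inv_mul_cancel_left]
  -- push the σ0⁻¹ (after σ3) right through σ2, σ3 and cancel with σ0
  rw [swap h02i, swap h03i, inv_mul_cancel_left]
  -- push the first σ0 right through everything and cancel with final σ0⁻¹
  rw [swap h02', swap h04, swap h03, swap h02, swap h03, swap h02', swap h04,
      swap h03', swap h04', mul_inv_cancel]
  rw [mul_one]
  -- now: σ3⁻¹ σ2⁻¹ σ4 σ3 σ2 σ3 σ2⁻¹ σ4 σ3⁻¹ σ4⁻¹
  rw [b23', mul_inv_cancel_left, swap h42, inv_mul_cancel_left, b34',
      inv_mul_cancel_left, mul_inv_cancel_left, mul_inv_cancel]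
end
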